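/- arXiv:1301.2498 — 3 statements merged into one kernel-verified Lean document; each statement's English description precedes it below -/
import Mathlib

section
/- A sequence $\mathbf{y}$ is idiosyncratic if and only if the limit $\lambda_1(\Sigma) = \lim_n \lambda_{n,1}(\Sigma_n)$ of the top eigenvalues of its covariance sections is finite. -/
open Filter MeasureTheory

/-- `y` is idiosyncratic: for every averaging sequence `(aₙ) ⊂ ℓ² ∩ ℓ²(Σ)`
(i.e. `aₙ ∈ ℓ²`, `‖aₙ‖₂ → 0`, and each `aₙ⊤y` is defined as the `L²`-limit `z n`
of its partial sums), the random variables `aₙ⊤y = z n` tend to `0` in `L²`. -/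
def Idiosyncratic {Ω : Type*} [MeasurableSpace Ω] {μ : Measure Ω}
    (y : ℕ → Lp ℝ 2 μ) : Prop :=
  ∀ (a : ℕ → ℕ → ℝ) (z : ℕ → Lp ℝ 2 μ),
    (∀ n, Memℓp (a n) 2) →
    Tendsto (fun n => ∑' k, (a n k) ^ 2) atTop (nhds 0) →
    (∀ n, Tendsto (fun N => ∑ k ∈ Finset.range N, a n k • y k) atTop (nhds (z n))) →
    Tendsto z atTop (nhds 0)

/-!
The bound `‖∑ xₖ yₖ‖² ≤ M ∑ xₖ²` on all finite sections says `λₙ,₁(Σₙ) ≤ M` for every `n`. If it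
holds, it passes to the `L²`-limits `aₙ⊤y`, so `‖aₙ⊤y‖² ≤ M ‖aₙ‖₂² → 0`. If it fails for every
`M`, normalising the violating sections gives finitely supported `aₙ` with `‖aₙ⊤y‖ = 1` but
`‖aₙ‖₂² < 1/(n+1)`, so `y` is not idiosyncratic.
-/

open Finset Topology

theorem Memℓp.summable_sq {ι : Type*} {a : ι → ℝ} (ha : Memℓp a 2) :
    Summable fun k => a k ^ 2 := by
  simpa using (memℓp_gen_iff (p := 2) (by norm_num)).1 ha

theorem hasSum_ite_lt {M : Type*} [AddCommMonoid M] [TopologicalSpace M] (f : ℕ → M) (n : ℕ) :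
    HasSum (fun k => if k < n then f k else 0) (∑ k ∈ range n, f k) := by
  rw [← sum_congr rfl fun k hk => if_pos (mem_range.1 hk)]
  exact hasSum_sum_of_ne_finset_zero fun k hk => if_neg (mt mem_range.2 hk)

theorem memℓp_ite_lt {E : Type*} [NormedAddCommGroup E] (x : ℕ → E) (n : ℕ) (p : ENNReal) :
    Memℓp (fun k => if k < n then x k else 0) p := by
  refine (memℓp_zero ((Set.finite_lt_nat n).subset fun k hk => ?_)).of_exponent_ge (by simp)
  by_contra h
  exact hk (if_neg h)

section SectionsBoundedBy

variable {E : Type*} [NormedAddCommGroup E] [NormedSpace ℝ E] (y : ℕ → E)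

def SectionsBoundedBy (M : ℝ) : Prop :=
  ∀ (n : ℕ) (x : ℕ → ℝ), ‖∑ k ∈ range n, x k • y k‖ ^ 2 ≤ M * ∑ k ∈ range n, x k ^ 2

variable {y}

theorem SectionsBoundedBy.norm_sq_le_of_tendsto {M : ℝ} (hM : SectionsBoundedBy y M)
    {a : ℕ → ℝ} (ha : Summable fun k => a k ^ 2) {z : E}
    (hz : Tendsto (fun N => ∑ k ∈ range N, a k • y k) atTop (𝓝 z)) :
    ‖z‖ ^ 2 ≤ M * ∑' k, a k ^ 2 :=
  le_of_tendsto_of_tendsto (hz.norm.pow 2) (ha.hasSum.tendsto_sum_nat.const_mul M)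
    (Eventually.of_forall fun N => hM N a)

theorem SectionsBoundedBy.tendsto_zero {M : ℝ} (hM : SectionsBoundedBy y M)
    {a : ℕ → ℕ → ℝ} (ha : ∀ m, Summable fun k => a m k ^ 2)
    (htend : Tendsto (fun m => ∑' k, a m k ^ 2) atTop (𝓝 0)) {z : ℕ → E}
    (hz : ∀ m, Tendsto (fun N => ∑ k ∈ range N, a m k • y k) atTop (𝓝 (z m))) :
    Tendsto z atTop (𝓝 0) := by
  have hbound m : ‖z m‖ ≤ √(M * ∑' k, a m k ^ 2) :=
    Real.le_sqrt_of_sq_le (hM.norm_sq_le_of_tendsto (ha m) (hz m))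
  refine tendsto_zero_iff_norm_tendsto_zero.2 (squeeze_zero (fun m => norm_nonneg _) hbound ?_)
  simpa using (htend.const_mul M).sqrt

theorem exists_norm_sum_eq_one_of_not_sectionsBoundedBy (hunb : ∀ M, ¬ SectionsBoundedBy y M)
    {ε : ℝ} (hε : 0 < ε) :
    ∃ (n : ℕ) (x : ℕ → ℝ), ‖∑ k ∈ range n, x k • y k‖ = 1 ∧ ∑ k ∈ range n, x k ^ 2 < ε := by
  obtain ⟨n, x, hx⟩ : ∃ (n : ℕ) (x : ℕ → ℝ),
      ε⁻¹ * ∑ k ∈ range n, x k ^ 2 < ‖∑ k ∈ range n, x k • y k‖ ^ 2 := by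
    simpa [SectionsBoundedBy] using hunb ε⁻¹
  set S := ∑ k ∈ range n, x k • y k
  have hεS : ∑ k ∈ range n, x k ^ 2 < ε * ‖S‖ ^ 2 := by
    rwa [inv_mul_eq_div, div_lt_iff₀' hε] at hx
  have hS : 0 < ‖S‖ := by
    have hsq : 0 ≤ ∑ k ∈ range n, x k ^ 2 := sum_nonneg fun k _ => sq_nonneg _
    exact norm_pos_iff.2 fun h => by simp [h] at hεS; linarith
  refine ⟨n, fun k => ‖S‖⁻¹ * x k, ?_, ?_⟩
  · simp_rw [mul_smul, ← smul_sum, norm_smul, norm_inv, norm_norm]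
    exact inv_mul_cancel₀ hS.ne'
  · simp_rw [mul_pow, ← mul_sum, inv_pow]
    rwa [inv_mul_lt_iff₀ (by positivity), mul_comm]

theorem exists_unit_averages_of_not_sectionsBoundedBy (hunb : ∀ M, ¬ SectionsBoundedBy y M) :
    ∃ (a : ℕ → ℕ → ℝ) (z : ℕ → E), (∀ m, Memℓp (a m) 2) ∧
      Tendsto (fun m => ∑' k, a m k ^ 2) atTop (𝓝 0) ∧
      (∀ m, Tendsto (fun N => ∑ k ∈ range N, a m k • y k) atTop (𝓝 (z m))) ∧ ∀ m, ‖z m‖ = 1 := by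
  choose n x hnorm hsmall using fun m : ℕ =>
    exists_norm_sum_eq_one_of_not_sectionsBoundedBy hunb (Nat.one_div_pos_of_nat (n := m))
  refine ⟨fun m k => if k < n m then x m k else 0, fun m => ∑ k ∈ range (n m), x m k • y k,
    fun m => memℓp_ite_lt (x m) (n m) 2, ?_, fun m => ?_, hnorm⟩
  · refine squeeze_zero (fun m => tsum_nonneg fun k => sq_nonneg _) (fun m => ?_)
      tendsto_one_div_add_atTop_nhds_zero_nat
    have hsum := (hasSum_ite_lt (fun k => x m k ^ 2) (n m)).tsum_eq
    simp only [ite_pow, zero_pow two_ne_zero] at hsum ⊢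
    exact hsum ▸ (hsmall m).le
  · simpa [ite_smul] using (hasSum_ite_lt (fun k => x m k • y k) (n m)).tendsto_sum_nat

end SectionsBoundedBy

theorem idiosyncratic_iff_finite_top_eigenvalue_general
    {Ω : Type*} [MeasurableSpace Ω] (μ : Measure Ω)
    (y : ℕ → Lp ℝ 2 μ) :
    Idiosyncratic y ↔
      ∃ M : ℝ, ∀ (n : ℕ) (x : ℕ → ℝ),
        ‖∑ k ∈ Finset.range n, x k • y k‖ ^ 2 ≤ M * ∑ k ∈ Finset.range n, x k ^ 2 := by
  constructor
  · intro hid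
    by_contra hunb
    obtain ⟨a, z, ha, htend, hz, hnorm⟩ :=
      exists_unit_averages_of_not_sectionsBoundedBy (not_exists.1 hunb)
    have hlim := (hid a z ha htend hz).norm
    simp only [hnorm, norm_zero] at hlim
    exact one_ne_zero (tendsto_nhds_unique tendsto_const_nhds hlim)
  · rintro ⟨M, hM⟩ a z ha htend hz
    exact SectionsBoundedBy.tendsto_zero hM (fun m => (ha m).summable_sq) htend hz

/-- a zero-mean finite-variance sequence `y` (with positive definite
covariance sections) is idiosyncratic if and only if the (nondecreasing) limit of the
top eigenvalues of its covariance sections is finite, i.e. the quadratic forms of the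
sections are uniformly bounded: `‖∑ x k • y k‖² ≤ M ∑ x k²` for some `M`. -/
theorem idiosyncratic_iff_finite_top_eigenvalue
    {Ω : Type*} [MeasurableSpace Ω] (μ : Measure Ω) [IsProbabilityMeasure μ]
    (y : ℕ → Lp ℝ 2 μ)
    (hmean : ∀ k, ∫ ω, (y k : Ω → ℝ) ω ∂μ = 0)
    (hposdef : ∀ (n : ℕ) (x : ℕ → ℝ), (∃ k ∈ Finset.range n, x k ≠ 0) →
      0 < ‖∑ k ∈ Finset.range n, x k • y k‖) :
    Idiosyncratic y ↔
      ∃ M : ℝ, ∀ (n : ℕ) (x : ℕ → ℝ),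
        ‖∑ k ∈ Finset.range n, x k • y k‖ ^ 2 ≤ M * ∑ k ∈ Finset.range n, x k ^ 2 :=
  idiosyncratic_iff_finite_top_eigenvalue_general μ y
end

section
/- Let $\mathbf{y}(k) = \lambda^k \mathbf{x}$ for a fixed zero-mean random variable $\mathbf{x}$ with variance $\sigma^2 > 0$ and $|\lambda| < 1$. Then the covariance sections $\Sigma_n$ all have rank one, and the limit of the top eigenvalue equals $\sigma^2 \lambda^2/(1-\lambda^2) < \infty$; consequently $\mathbf{y}$ is idiosyncratic even though it is purely deterministic of rank 1. -/
/-!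
Every `y k` with `k ≥ 1` is a multiple of the single vector `x`, so the covariance sections are
the rank-one matrices `σ² v vᵀ` with `v = (λ, …, λⁿ)`, whose traces are the partial sums of a
geometric series. Idiosyncrasy only needs `∑ ‖y k‖² < ∞`: by Cauchy–Schwarz,
`‖∑ a k • y k‖ ≤ ‖a‖₂ (∑ ‖y k‖²)^(1/2)`.
-/

open Filter MeasureTheory Matrix
open scoped RealInnerProductSpace

theorem Memℓp.summable_sq_s9 {α : Type*} {f : α → ℝ} (hf : Memℓp f 2) :
    Summable fun i => f i ^ 2 := by
  simpa using (memℓp_gen_iff (by norm_num : 0 < (2 : ENNReal).toReal)).1 hf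

theorem Matrix.rank_pos_of_ne_zero {m n K : Type*} [Fintype n] [Field K]
    {A : Matrix m n K} (hA : A ≠ 0) : 0 < A.rank := by
  rw [Matrix.rank, Module.finrank_pos_iff, Submodule.nontrivial_iff_ne_bot,
    Ne, LinearMap.range_eq_bot]
  classical
  rwa [← Matrix.toLin'_apply', LinearEquiv.map_eq_zero_iff]

theorem Matrix.rank_vecMulVec_of_ne_zero {m n K : Type*} [Fintype n] [Field K]
    {w : m → K} {v : n → K} (hw : w ≠ 0) (hv : v ≠ 0) : (vecMulVec w v).rank = 1 :=
  le_antisymm (rank_vecMulVec_le w v) <| rank_pos_of_ne_zero fun h => by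
    obtain ⟨i, hi⟩ := Function.ne_iff.mp hw
    obtain ⟨j, hj⟩ := Function.ne_iff.mp hv
    exact mul_ne_zero hi hj congr($h i j)

theorem gram_smul_eq_vecMulVec {E ι : Type*} [SeminormedAddCommGroup E] [InnerProductSpace ℝ E]
    (c : ι → ℝ) (x : E) :
    (of fun i j => ⟪c i • x, c j • x⟫) = vecMulVec (‖x‖ ^ 2 • c) c := by
  ext i j
  simp only [of_apply, vecMulVec_apply, Pi.smul_apply, smul_eq_mul, real_inner_smul_left,
    real_inner_smul_right, real_inner_self_eq_norm_sq]
  ring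

theorem hasSum_sq_pow_succ {r : ℝ} (hr : |r| < 1) :
    HasSum (fun k : ℕ => (r ^ (k + 1)) ^ 2) (r ^ 2 / (1 - r ^ 2)) := by
  have hr2 : r ^ 2 < 1 := by rw [← sq_abs]; nlinarith [abs_nonneg r]
  have hterm : (fun k : ℕ => (r ^ (k + 1)) ^ 2) = fun k => r ^ 2 * (r ^ 2) ^ k :=
    funext fun k => by ring
  rw [hterm, div_eq_mul_inv]
  exact (hasSum_geometric_of_lt_one (sq_nonneg r) hr2).mul_left (r ^ 2)

section
variable {E : Type*} [SeminormedAddCommGroup E] [NormedSpace ℝ E]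

theorem norm_le_of_tendsto_sum_smul {a : ℕ → ℝ} {y : ℕ → E} {z : E}
    (ha : Summable fun k => a k ^ 2) (hy : Summable fun k => ‖y k‖ ^ 2)
    (hz : Tendsto (fun N => ∑ k ∈ Finset.range N, a k • y k) atTop (nhds z)) :
    ‖z‖ ≤ √(∑' k, a k ^ 2) * √(∑' k, ‖y k‖ ^ 2) := by
  refine le_of_tendsto' hz.norm fun N => ?_
  calc ‖∑ k ∈ Finset.range N, a k • y k‖
      ≤ ∑ k ∈ Finset.range N, |a k| * ‖y k‖ := by
        simpa only [norm_smul, Real.norm_eq_abs] using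
          norm_sum_le (Finset.range N) fun k => a k • y k
    _ ≤ √(∑ k ∈ Finset.range N, |a k| ^ 2) * √(∑ k ∈ Finset.range N, ‖y k‖ ^ 2) :=
        Real.sum_mul_le_sqrt_mul_sqrt _ _ _
    _ ≤ √(∑' k, a k ^ 2) * √(∑' k, ‖y k‖ ^ 2) := by
        simp only [sq_abs]
        gcongr
        · exact ha.sum_le_tsum _ fun k _ => sq_nonneg _
        · exact hy.sum_le_tsum _ fun k _ => sq_nonneg _

theorem tendsto_zero_of_tendsto_sum_smul {a : ℕ → ℕ → ℝ} {y : ℕ → E} {z : ℕ → E}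
    (ha : ∀ n, Summable fun k => a n k ^ 2)
    (ha0 : Tendsto (fun n => ∑' k, a n k ^ 2) atTop (nhds 0))
    (hy : Summable fun k => ‖y k‖ ^ 2)
    (hz : ∀ n, Tendsto (fun N => ∑ k ∈ Finset.range N, a n k • y k) atTop (nhds (z n))) :
    Tendsto z atTop (nhds 0) := by
  refine squeeze_zero_norm (fun n => norm_le_of_tendsto_sum_smul (ha n) hy (hz n)) ?_
  simpa using ha0.sqrt.mul_const √(∑' k, ‖y k‖ ^ 2)

end

theorem geometric_PD_sequence_idiosyncratic_general
    {Ω : Type*} [MeasurableSpace Ω] (μ : Measure Ω)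
    (x : Lp ℝ 2 μ) (σ2 lam : ℝ)
    (hvar : ‖x‖ ^ 2 = σ2) (hσ : 0 < σ2)
    (hlam0 : lam ≠ 0) (hlam1 : |lam| < 1)
    (y : ℕ → Lp ℝ 2 μ)
    (hy : ∀ k : ℕ, 1 ≤ k → y k = lam ^ k • x) :
    (∀ n : ℕ, 1 ≤ n →
      (Matrix.of fun i j : Fin n => ⟪y ((i : ℕ) + 1), y ((j : ℕ) + 1)⟫).rank = 1) ∧
    Tendsto (fun n : ℕ =>
        (Matrix.of fun i j : Fin n => ⟪y ((i : ℕ) + 1), y ((j : ℕ) + 1)⟫).trace)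
      atTop (nhds (σ2 * lam ^ 2 / (1 - lam ^ 2))) ∧
    (∀ (a : ℕ → ℕ → ℝ) (z : ℕ → Lp ℝ 2 μ),
      (∀ n, Memℓp (a n) 2) →
      Tendsto (fun n => ∑' k, (a n k) ^ 2) atTop (nhds 0) →
      (∀ n, Tendsto (fun N => ∑ k ∈ Finset.range N, a n k • y k) atTop (nhds (z n))) →
      Tendsto z atTop (nhds 0)) := by
  have hcov : ∀ n : ℕ, (of fun i j : Fin n => ⟪y ((i : ℕ) + 1), y ((j : ℕ) + 1)⟫) =
      vecMulVec (σ2 • fun i : Fin n => lam ^ ((i : ℕ) + 1))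
        fun i : Fin n => lam ^ ((i : ℕ) + 1) := by
    intro n
    rw [← hvar, ← gram_smul_eq_vecMulVec]
    simp only [hy _ (Nat.le_add_left 1 _)]
  have hgeom := hasSum_sq_pow_succ hlam1
  refine ⟨fun n hn => ?_, ?_, fun a z ha ha0 hz => ?_⟩
  · refine (hcov n).symm ▸ rank_vecMulVec_of_ne_zero ?_ ?_ <;>
      refine Function.ne_iff.mpr ⟨⟨0, hn⟩, ?_⟩ <;> simp [hσ.ne', hlam0]
  · have htrace : ∀ n : ℕ,
        (of fun i j : Fin n => ⟪y ((i : ℕ) + 1), y ((j : ℕ) + 1)⟫).trace =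
          σ2 * ∑ k ∈ Finset.range n, (lam ^ (k + 1)) ^ 2 := by
      intro n
      rw [hcov, trace_vecMulVec, dotProduct, Finset.mul_sum,
        ← Fin.sum_univ_eq_sum_range (fun k => σ2 * (lam ^ (k + 1)) ^ 2)]
      simp only [Pi.smul_apply, smul_eq_mul, mul_assoc, sq]
    simp_rw [htrace, mul_div_assoc]
    exact hgeom.tendsto_sum_nat.const_mul σ2
  · have hy2 : Summable fun k => ‖y k‖ ^ 2 := by
      refine (summable_nat_add_iff 1).mp ?_
      simp only [hy _ (Nat.le_add_left 1 _), norm_smul, mul_pow, Real.norm_eq_abs, sq_abs, hvar]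
      exact hgeom.summable.mul_right σ2
    exact tendsto_zero_of_tendsto_sum_smul (fun n => (ha n).summable_sq_s9) ha0 hy2 hz

/-- for `y(k) = λᵏ x` (`k ≥ 1`) with `x` zero-mean of variance `σ² > 0`
and `0 < |λ| < 1`, all covariance sections `Σₙ` have rank one, the limit of the top
eigenvalue (equal to the trace, since the rank is one) is `σ²λ²/(1-λ²) < ∞`, and
consequently `y` is idiosyncratic even though it is purely deterministic of rank 1. -/
theorem geometric_PD_sequence_idiosyncratic
    {Ω : Type*} [MeasurableSpace Ω] (μ : Measure Ω) [IsProbabilityMeasure μ]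
    (x : Lp ℝ 2 μ) (σ2 lam : ℝ)
    (hmean : ∫ ω, (x : Ω → ℝ) ω ∂μ = 0)
    (hvar : ‖x‖ ^ 2 = σ2) (hσ : 0 < σ2)
    (hlam0 : lam ≠ 0) (hlam1 : |lam| < 1)
    (y : ℕ → Lp ℝ 2 μ)
    (hy : ∀ k : ℕ, 1 ≤ k → y k = lam ^ k • x) :
    (∀ n : ℕ, 1 ≤ n →
      (Matrix.of fun i j : Fin n => ⟪y ((i : ℕ) + 1), y ((j : ℕ) + 1)⟫).rank = 1) ∧
    Tendsto (fun n : ℕ =>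
        (Matrix.of fun i j : Fin n => ⟪y ((i : ℕ) + 1), y ((j : ℕ) + 1)⟫).trace)
      atTop (nhds (σ2 * lam ^ 2 / (1 - lam ^ 2))) ∧
    (∀ (a : ℕ → ℕ → ℝ) (z : ℕ → Lp ℝ 2 μ),
      (∀ n, Memℓp (a n) 2) →
      Tendsto (fun n => ∑' k, (a n k) ^ 2) atTop (nhds 0) →
      (∀ n, Tendsto (fun N => ∑ k ∈ Finset.range N, a n k • y k) atTop (nhds (z n))) →
      Tendsto z atTop (nhds 0)) :=
  geometric_PD_sequence_idiosyncratic_general μ x σ2 lam hvar hσ hlam0 hlam1 y hy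
end

section
/- Let $\mathbf{y}(k) = \sum_{i=1}^q f_i(k)\mathbf{x}_i$ be a purely deterministic sequence of rank $q$ (with $\mathbf{x}$ orthonormal). Then all $q$ nonzero eigenvalues of the covariance sections $F^{n\top}F^n$ tend to $+\infty$ as $n \to \infty$ if and only if the vectors $f_1,\dots,f_q$ are strongly linearly independent, i.e., $\lim_n \|f_i^n - \Pi[f_i^n \mid \mathrm{span}\{f_j^n : j \neq i\}]\|_2 = +\infty$ for each $i$. -/
/-! The quadratic form of `Fⁿ⊤Fⁿ` is `x ↦ ‖∑ⱼ xⱼ fⱼⁿ‖²`. If `xᵢ ≠ 0`, dividing by `xᵢ` writes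
`∑ⱼ xⱼ fⱼⁿ` as `xᵢ` times `fᵢⁿ` minus a combination of the other `fⱼⁿ`, so the form is at least
`xᵢ² ‖f̃ᵢⁿ‖²`; averaging over `i` bounds it below by `(minᵢ ‖f̃ᵢⁿ‖² / q) ‖x‖²`. Conversely, on
`x = eᵢ - α` (with `α` supported off `i`) the form is the squared residual of `fᵢⁿ` against
`∑ αⱼ fⱼⁿ` while `‖x‖² ≥ 1`. -/

open Filter Matrix

/-- The truncated loading matrix `Fⁿ = [f₁ⁿ … f_qⁿ] ∈ ℝ^{n×q}`. -/
def loadMat (q : ℕ) (f : Fin q → ℕ → ℝ) (n : ℕ) : Matrix (Fin n) (Fin q) ℝ :=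
  Matrix.of fun k i => f i k

/-- The norm of the residual of `fᵢⁿ` after projecting onto
`span{fⱼⁿ : j ≠ i} ⊂ ℝⁿ`, i.e. the distance from `fᵢⁿ` to that span. -/
noncomputable def residNorm (q : ℕ) (f : Fin q → ℕ → ℝ) (i : Fin q) (n : ℕ) : ℝ :=
  ⨅ α : {j : Fin q // j ≠ i} → ℝ,
    Real.sqrt (∑ k ∈ Finset.range n,
      (f i k - ∑ j : {j : Fin q // j ≠ i}, α j * f (j : Fin q) k) ^ 2)

open Finset

variable {q : ℕ} (f : Fin q → ℕ → ℝ)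

lemma dotProduct_gram_loadMat_mulVec (n : ℕ) (x : Fin q → ℝ) :
    x ⬝ᵥ ((loadMat q f n)ᵀ * loadMat q f n).mulVec x
      = ∑ k ∈ range n, (∑ i, x i * f i k) ^ 2 := by
  rw [← Matrix.mulVec_mulVec, Matrix.dotProduct_mulVec, Matrix.vecMul_transpose,
    ← Fin.sum_univ_eq_sum_range (fun k => (∑ i, x i * f i k) ^ 2) n]
  refine sum_congr rfl fun k _ => ?_
  simp only [Matrix.mulVec, dotProduct, loadMat, Matrix.of_apply, sq]
  congr 1 <;> exact sum_congr rfl fun i _ => mul_comm _ _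

lemma sum_mul_eq_mul_residual {x : Fin q → ℝ} {i : Fin q} (hi : x i ≠ 0) (k : ℕ) :
    ∑ j, x j * f j k
      = x i * (f i k - ∑ j : {j // j ≠ i}, -(x j / x i) * f j k) := by
  rw [Fintype.sum_eq_add_sum_subtype_ne _ i, mul_sub, mul_sum, sub_eq_add_neg,
    ← sum_neg_distrib]
  congr 1
  exact sum_congr rfl fun j _ => by field_simp

lemma residNorm_le (i : Fin q) (α : {j // j ≠ i} → ℝ) (n : ℕ) :
    residNorm q f i n ≤ √(∑ k ∈ range n, (f i k - ∑ j : {j // j ≠ i}, α j * f j k) ^ 2) :=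
  ciInf_le ⟨0, by rintro _ ⟨β, rfl⟩; exact Real.sqrt_nonneg _⟩ α

lemma le_residNorm_of_forall_sq_mul_le {M : ℝ} {n : ℕ}
    (h : ∀ x : Fin q → ℝ, M ^ 2 * ∑ j, x j ^ 2 ≤ ∑ k ∈ range n, (∑ j, x j * f j k) ^ 2)
    (i : Fin q) : M ≤ residNorm q f i n := by
  refine le_ciInf fun α => Real.le_sqrt_of_sq_le ?_
  set x : Fin q → ℝ := fun j => if h : j = i then 1 else -α ⟨j, h⟩
  have hxi : x i = 1 := dif_pos rfl
  have hnorm : 1 ≤ ∑ j, x j ^ 2 := by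
    simpa [hxi] using single_le_sum (fun j _ => sq_nonneg (x j)) (mem_univ i)
  have hcombo : ∀ k, ∑ j, x j * f j k = f i k - ∑ j : {j // j ≠ i}, α j * f j k := by
    intro k
    rw [Fintype.sum_eq_add_sum_subtype_ne _ i, hxi, one_mul, sub_eq_add_neg,
      ← sum_neg_distrib]
    congr 1
    exact sum_congr rfl fun j _ => by simp [x, j.2]
  calc M ^ 2 ≤ M ^ 2 * ∑ j, x j ^ 2 := le_mul_of_one_le_right (sq_nonneg M) hnorm
    _ ≤ _ := by simpa only [hcombo] using h x

lemma sq_mul_residNorm_sq_le (x : Fin q → ℝ) (i : Fin q) (n : ℕ) :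
    x i ^ 2 * residNorm q f i n ^ 2 ≤ ∑ k ∈ range n, (∑ j, x j * f j k) ^ 2 := by
  by_cases hi : x i = 0
  · simpa [hi] using sum_nonneg fun k _ => sq_nonneg _
  set α : {j // j ≠ i} → ℝ := fun j => -(x j / x i)
  set S := ∑ k ∈ range n, (f i k - ∑ j : {j // j ≠ i}, α j * f j k) ^ 2
  have hS : 0 ≤ S := sum_nonneg fun k _ => sq_nonneg _
  have hres : residNorm q f i n ^ 2 ≤ S :=
    (Real.le_sqrt (Real.iInf_nonneg fun _ => Real.sqrt_nonneg _) hS).1 (residNorm_le f i α n)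
  calc x i ^ 2 * residNorm q f i n ^ 2 ≤ x i ^ 2 * S := by gcongr
    _ = _ := by
      rw [mul_sum]
      exact sum_congr rfl fun k _ => by rw [sum_mul_eq_mul_residual f hi k]; ring

lemma mul_sum_sq_le_of_forall_le_residNorm_sq {C : ℝ} {n : ℕ}
    (h : ∀ i, q * C ≤ residNorm q f i n ^ 2) (x : Fin q → ℝ) :
    C * ∑ j, x j ^ 2 ≤ ∑ k ∈ range n, (∑ j, x j * f j k) ^ 2 := by
  rcases Nat.eq_zero_or_pos q with rfl | hq
  · simp only [univ_eq_empty, sum_empty, mul_zero]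
    positivity
  refine le_of_mul_le_mul_left ?_ (Nat.cast_pos.2 hq : (0 : ℝ) < q)
  calc (q : ℝ) * (C * ∑ j, x j ^ 2) = ∑ i, x i ^ 2 * (q * C) := by
        rw [mul_sum, mul_sum]
        exact sum_congr rfl fun i _ => by ring
    _ ≤ ∑ i, x i ^ 2 * residNorm q f i n ^ 2 := by gcongr with i; exact h i
    _ ≤ ∑ _i : Fin q, ∑ k ∈ range n, (∑ j, x j * f j k) ^ 2 := by
        gcongr with i; exact sq_mul_residNorm_sq_le f x i n
    _ = _ := by simp

theorem q_aggregate_iff_strongly_linearly_independent_general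
    (q : ℕ) (f : Fin q → ℕ → ℝ) :
    (∀ C : ℝ, ∀ᶠ n in atTop, ∀ x : Fin q → ℝ,
        C * (∑ i, x i ^ 2) ≤ x ⬝ᵥ ((loadMat q f n)ᵀ * loadMat q f n).mulVec x) ↔
    (∀ i : Fin q, Tendsto (residNorm q f i) atTop atTop) := by
  simp only [dotProduct_gram_loadMat_mulVec]
  constructor
  · intro h i
    refine tendsto_atTop.2 fun M => ?_
    filter_upwards [h (M ^ 2)] with n hn using le_residNorm_of_forall_sq_mul_le f hn i
  · intro h C
    have hsq : ∀ᶠ n in atTop, ∀ i, q * C ≤ residNorm q f i n ^ 2 := eventually_all.2 fun i =>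
      ((tendsto_pow_atTop two_ne_zero).comp (h i)).eventually_ge_atTop _
    filter_upwards [hsq] with n hn using mul_sum_sq_le_of_forall_le_residNorm_sq f hn

/-- for a purely deterministic sequence `y(k) = ∑ᵢ fᵢ(k) xᵢ` of rank `q`
(`x` orthonormal, `Fⁿ` of full column rank for all large `n`), all `q` nonzero
eigenvalues of the covariance sections — i.e. the eigenvalues of the Gram matrices
`Fⁿ⊤Fⁿ` — tend to `+∞` (equivalently the smallest eigenvalue of `Fⁿ⊤Fⁿ` does) if and
only if the vectors `f₁, …, f_q` are strongly linearly independent, i.e.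
`‖fᵢⁿ - Π[fᵢⁿ ∣ span{fⱼⁿ : j ≠ i}]‖₂ → ∞` for each `i`. -/
theorem q_aggregate_iff_strongly_linearly_independent
    (q : ℕ) (f : Fin q → ℕ → ℝ)
    (hrank : ∀ᶠ n in atTop, (loadMat q f n).rank = q) :
    (∀ C : ℝ, ∀ᶠ n in atTop, ∀ x : Fin q → ℝ,
        C * (∑ i, x i ^ 2) ≤ x ⬝ᵥ ((loadMat q f n)ᵀ * loadMat q f n).mulVec x) ↔
    (∀ i : Fin q, Tendsto (residNorm q f i) atTop atTop) :=
  q_aggregate_iff_strongly_linearly_independent_general q f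
end
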